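/- (General global convergence, standard Wolfe) Assume Assumptions A1 and A2 hold for x⁰, and consider the conjugate gradient iteration with Σ_{k≥0} 1/‖d^k‖² = +∞. If there exists c > 0 such that the sufficient descent condition ψ_{x^k}(d^k) ≤ c·ψ_{x^k}(v(x^k)) holds for all k ≥ 0, and each t_k satisfies the standard Wolfe conditions at x^k along d^k, then liminf_{k→∞} ‖v(x^k)‖ = 0. -/

import Mathlib

open scoped BigOperators

noncomputable def pd (n : ℕ) (F : EuclideanSpace ℝ (Fin n) → ℝ)
    (x : EuclideanSpace ℝ (Fin n)) (j : Fin n) : ℝ :=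
  fderiv ℝ F x (EuclideanSpace.single j (1 : ℝ))

noncomputable def glo (n : ℕ) (F H : EuclideanSpace ℝ (Fin n) → ℝ)
    (x : EuclideanSpace ℝ (Fin n)) (j : Fin n) : ℝ :=
  min (pd n F x j) (pd n H x j)

noncomputable def ghi (n : ℕ) (F H : EuclideanSpace ℝ (Fin n) → ℝ)
    (x : EuclideanSpace ℝ (Fin n)) (j : Fin n) : ℝ :=
  max (pd n F x j) (pd n H x j)

noncomputable def gloVec (n : ℕ) (F H : EuclideanSpace ℝ (Fin n) → ℝ)
    (x : EuclideanSpace ℝ (Fin n)) : EuclideanSpace ℝ (Fin n) :=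
  WithLp.toLp 2 (fun j => glo n F H x j)

noncomputable def ghiVec (n : ℕ) (F H : EuclideanSpace ℝ (Fin n) → ℝ)
    (x : EuclideanSpace ℝ (Fin n)) : EuclideanSpace ℝ (Fin n) :=
  WithLp.toLp 2 (fun j => ghi n F H x j)

noncomputable def psi (m n : ℕ) (Gl Gu : Fin m → EuclideanSpace ℝ (Fin n) → ℝ)
    (x v : EuclideanSpace ℝ (Fin n)) : ℝ :=
  ⨆ i : Fin m, (1 / 2 : ℝ) *
    ((∑ j : Fin n, (glo n (Gl i) (Gu i) x j + ghi n (Gl i) (Gu i) x j) * v j) +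
     (∑ j : Fin n, (ghi n (Gl i) (Gu i) x j - glo n (Gl i) (Gu i) x j) * |v j|))

def LevelSet (m n : ℕ) (Gl Gu : Fin m → EuclideanSpace ℝ (Fin n) → ℝ)
    (x0 : EuclideanSpace ℝ (Fin n)) : Set (EuclideanSpace ℝ (Fin n)) :=
  {x | ∀ i : Fin m, Gl i x ≤ Gl i x0 ∧ Gu i x ≤ Gu i x0}

def StdWolfe (m n : ℕ) (Gl Gu : Fin m → EuclideanSpace ℝ (Fin n) → ℝ)
    (ρ σ : ℝ) (x d : EuclideanSpace ℝ (Fin n)) (t : ℝ) : Prop :=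
  (∀ i : Fin m,
      Gl i (x + t • d) ≤ Gl i x + ρ * t * psi m n Gl Gu x d ∧
      Gu i (x + t • d) ≤ Gu i x + ρ * t * psi m n Gl Gu x d) ∧
  σ * psi m n Gl Gu x d ≤ psi m n Gl Gu (x + t • d) d

def StrongWolfe (m n : ℕ) (Gl Gu : Fin m → EuclideanSpace ℝ (Fin n) → ℝ)
    (ρ σ : ℝ) (x d : EuclideanSpace ℝ (Fin n)) (t : ℝ) : Prop :=
  (∀ i : Fin m,
      Gl i (x + t • d) ≤ Gl i x + ρ * t * psi m n Gl Gu x d ∧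
      Gu i (x + t • d) ≤ Gu i x + ρ * t * psi m n Gl Gu x d) ∧
  |psi m n Gl Gu (x + t • d) d| ≤ σ * |psi m n Gl Gu x d|

def AssumptionA1 (m n : ℕ) (Gl Gu : Fin m → EuclideanSpace ℝ (Fin n) → ℝ)
    (x0 : EuclideanSpace ℝ (Fin n)) : Prop :=
  ∀ i : Fin m, ∃ L : ℝ, 0 < L ∧
    ∀ y ∈ LevelSet m n Gl Gu x0, ∀ z ∈ LevelSet m n Gl Gu x0,
      ‖gloVec n (Gl i) (Gu i) y - gloVec n (Gl i) (Gu i) z‖ ≤ L * ‖y - z‖ ∧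
      ‖ghiVec n (Gl i) (Gu i) y - ghiVec n (Gl i) (Gu i) z‖ ≤ L * ‖y - z‖

def AssumptionA2 (m n : ℕ) (Gl Gu : Fin m → EuclideanSpace ℝ (Fin n) → ℝ)
    (x0 : EuclideanSpace ℝ (Fin n)) : Prop :=
  ∀ y : ℕ → EuclideanSpace ℝ (Fin n),
    (∀ k, y k ∈ LevelSet m n Gl Gu x0) →
    (∀ (i : Fin m) (k : ℕ), Gl i (y (k+1)) ≤ Gl i (y k) ∧ Gu i (y (k+1)) ≤ Gu i (y k)) →
    ∀ i : Fin m, (∃ Cl : ℝ, ∀ k, Cl ≤ Gl i (y k)) ∧ (∃ Cu : ℝ, ∀ k, Cu ≤ Gu i (y k))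

/-!
The scalarization ψ_x(v) is a maximum of terms that are linear in the endpoint gradients, so
assumption A1 makes x ↦ ψ_x(d) Lipschitz along the iterates with constant 2L‖d‖. The curvature
condition (W2) then forces a step t_k ≥ (1 - σ)(-ψ_k)/(2L‖d^k‖²), while the sufficient decrease
condition (W1) together with A2 makes Σ t_k(-ψ_k) finite; hence the Zoutendijk condition
Σ ψ_k²/‖d^k‖² < ∞. Since v(x) minimizes ψ_x(w) + ‖w‖²/2 and ψ_x(0) = 0, we have
ψ_x(v(x)) ≤ -‖v(x)‖²/2, so if ‖v(x^k)‖ stayed above ε the sufficient descent condition would bound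
ψ_k² away from zero and make Σ 1/‖d^k‖² finite.
-/

open Filter

theorem summable_of_add_le_of_forall_le {a f : ℕ → ℝ} {C : ℝ} (ha : ∀ k, 0 ≤ a k)
    (hf : ∀ k, f (k + 1) + a k ≤ f k) (hC : ∀ k, C ≤ f k) : Summable a := by
  refine summable_of_sum_range_le (c := f 0 - C) ha fun K => ?_
  calc ∑ k ∈ Finset.range K, a k
      ≤ ∑ k ∈ Finset.range K, (f k - f (k + 1)) :=
        Finset.sum_le_sum fun k _ => by linarith [hf k]
    _ = f 0 - f K := Finset.sum_range_sub' f K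
    _ ≤ f 0 - C := by linarith [hC K]

theorem summable_of_summable_mul_of_eventually_le {a b : ℕ → ℝ} {δ : ℝ} (hδ : 0 < δ)
    (hb : ∀ k, 0 ≤ b k) (ha : ∀ᶠ k in atTop, δ ≤ a k) (hab : Summable fun k => a k * b k) :
    Summable b := by
  refine (hab.mul_left δ⁻¹).of_norm_bounded_eventually_nat (ha.mono fun k hk => ?_)
  rw [Real.norm_of_nonneg (hb k), le_inv_mul_iff₀ hδ]
  exact mul_le_mul_of_nonneg_right hk (hb k)

theorem liminf_eq_zero_of_frequently_lt {u : ℕ → ℝ} (hu : ∀ k, 0 ≤ u k)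
    (h : ∀ ε > 0, ∃ᶠ k in atTop, u k < ε) : liminf u atTop = 0 := by
  have hcobdd : IsCoboundedUnder (· ≥ ·) atTop u :=
    .of_frequently_le ((h 1 one_pos).mono fun _ => le_of_lt)
  have hbdd : IsBoundedUnder (· ≥ ·) atTop u := isBoundedUnder_of ⟨0, hu⟩
  exact le_antisymm ((liminf_le_iff hcobdd hbdd).2 h) (le_liminf_of_le hcobdd (.of_forall hu))

section Scalarization

variable {m n : ℕ} {Gl Gu : Fin m → EuclideanSpace ℝ (Fin n) → ℝ}

theorem abs_sum_mul_le_norm_mul_norm (a v : EuclideanSpace ℝ (Fin n)) :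
    |∑ j, a j * v j| ≤ ‖a‖ * ‖v‖ := by
  simpa [PiLp.inner_apply, mul_comm] using abs_real_inner_le_norm a v

theorem norm_toLp_abs (v : EuclideanSpace ℝ (Fin n)) :
    ‖(WithLp.toLp 2 fun j => |v j| : EuclideanSpace ℝ (Fin n))‖ = ‖v‖ := by
  simp [EuclideanSpace.norm_eq, sq_abs]

noncomputable def psiTerm (a b v : EuclideanSpace ℝ (Fin n)) : ℝ :=
  (1 / 2 : ℝ) * ((∑ j, (a j + b j) * v j) + ∑ j, (b j - a j) * |v j|)

theorem psiTerm_sub_psiTerm_le (a b a' b' v : EuclideanSpace ℝ (Fin n)) :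
    psiTerm a b v - psiTerm a' b' v ≤ (‖a - a'‖ + ‖b - b'‖) * ‖v‖ := by
  set w : EuclideanSpace ℝ (Fin n) := WithLp.toLp 2 fun j => |v j|
  have key : psiTerm a b v - psiTerm a' b' v =
      (1 / 2 : ℝ) * ((∑ j, (a - a') j * v j) - (∑ j, (a - a') j * w j)
        + (∑ j, (b - b') j * v j) + (∑ j, (b - b') j * w j)) := by
    simp only [psiTerm, w, PiLp.sub_apply, sub_mul, add_mul, Finset.sum_sub_distrib,
      Finset.sum_add_distrib]
    ring
  have hw : ‖w‖ = ‖v‖ := norm_toLp_abs v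
  have h1 := abs_le.mp (abs_sum_mul_le_norm_mul_norm (a - a') v)
  have h2 := abs_le.mp (abs_sum_mul_le_norm_mul_norm (a - a') w)
  have h3 := abs_le.mp (abs_sum_mul_le_norm_mul_norm (b - b') v)
  have h4 := abs_le.mp (abs_sum_mul_le_norm_mul_norm (b - b') w)
  rw [hw] at h2 h4
  rw [key]
  linarith [h1.2, h2.1, h3.2, h4.2]

theorem psi_eq_iSup_psiTerm (x v : EuclideanSpace ℝ (Fin n)) :
    psi m n Gl Gu x v = ⨆ i, psiTerm (gloVec n (Gl i) (Gu i) x) (ghiVec n (Gl i) (Gu i) x) v :=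
  rfl

theorem psi_zero_right (x : EuclideanSpace ℝ (Fin n)) : psi m n Gl Gu x 0 = 0 := by
  simp [psi]

theorem psi_le_neg_half_sq_norm {x v : EuclideanSpace ℝ (Fin n)}
    (hv : ∀ w, psi m n Gl Gu x v + (1 / 2) * ‖v‖ ^ 2 ≤ psi m n Gl Gu x w + (1 / 2) * ‖w‖ ^ 2) :
    psi m n Gl Gu x v ≤ -(1 / 2) * ‖v‖ ^ 2 := by
  have h := hv 0
  rw [psi_zero_right, norm_zero] at h
  linarith

theorem psi_le_psi_add [Nonempty (Fin m)] {L : ℝ} {y z : EuclideanSpace ℝ (Fin n)}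
    (hLip : ∀ i, ‖gloVec n (Gl i) (Gu i) y - gloVec n (Gl i) (Gu i) z‖ ≤ L * ‖y - z‖ ∧
      ‖ghiVec n (Gl i) (Gu i) y - ghiVec n (Gl i) (Gu i) z‖ ≤ L * ‖y - z‖)
    (w : EuclideanSpace ℝ (Fin n)) :
    psi m n Gl Gu y w ≤ psi m n Gl Gu z w + 2 * L * ‖y - z‖ * ‖w‖ := by
  rw [psi_eq_iSup_psiTerm y, psi_eq_iSup_psiTerm z]
  refine ciSup_le fun i => ?_
  have hz := le_ciSup (Finite.bddAbove_range
    fun i => psiTerm (gloVec n (Gl i) (Gu i) z) (ghiVec n (Gl i) (Gu i) z) w) i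
  have hdiff := psiTerm_sub_psiTerm_le (gloVec n (Gl i) (Gu i) y) (ghiVec n (Gl i) (Gu i) y)
    (gloVec n (Gl i) (Gu i) z) (ghiVec n (Gl i) (Gu i) z) w
  have hsum : (‖gloVec n (Gl i) (Gu i) y - gloVec n (Gl i) (Gu i) z‖ +
      ‖ghiVec n (Gl i) (Gu i) y - ghiVec n (Gl i) (Gu i) z‖) * ‖w‖ ≤ 2 * L * ‖y - z‖ * ‖w‖ := by
    nlinarith [(hLip i).1, (hLip i).2, norm_nonneg w]
  exact (sub_le_iff_le_add'.mp hdiff).trans (add_le_add hz hsum)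

end Scalarization

section Iteration

variable {m n : ℕ} {Gl Gu : Fin m → EuclideanSpace ℝ (Fin n) → ℝ}

theorem AssumptionA1.exists_uniform {x0 : EuclideanSpace ℝ (Fin n)}
    (h : AssumptionA1 m n Gl Gu x0) :
    ∃ L : ℝ, ∀ i, ∀ y ∈ LevelSet m n Gl Gu x0, ∀ z ∈ LevelSet m n Gl Gu x0,
      ‖gloVec n (Gl i) (Gu i) y - gloVec n (Gl i) (Gu i) z‖ ≤ L * ‖y - z‖ ∧
      ‖ghiVec n (Gl i) (Gu i) y - ghiVec n (Gl i) (Gu i) z‖ ≤ L * ‖y - z‖ := by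
  choose L _ hL using h
  obtain ⟨M, hM⟩ := Finite.bddAbove_range L
  refine ⟨M, fun i y hy z hz => ?_⟩
  have hLM : L i * ‖y - z‖ ≤ M * ‖y - z‖ :=
    mul_le_mul_of_nonneg_right (hM (Set.mem_range_self i)) (norm_nonneg _)
  exact ⟨(hL i y hy z hz).1.trans hLM, (hL i y hy z hz).2.trans hLM⟩

theorem mem_levelSet_of_forall_succ_le {y : ℕ → EuclideanSpace ℝ (Fin n)}
    (h : ∀ i k, Gl i (y (k + 1)) ≤ Gl i (y k) ∧ Gu i (y (k + 1)) ≤ Gu i (y k)) (k : ℕ) :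
    y k ∈ LevelSet m n Gl Gu (y 0) := fun i =>
  ⟨antitone_nat_of_succ_le (f := fun k => Gl i (y k)) (fun k => (h i k).1) (Nat.zero_le k),
    antitone_nat_of_succ_le (f := fun k => Gu i (y k)) (fun k => (h i k).2) (Nat.zero_le k)⟩

theorem StdWolfe.objectives_le {ρ σ t : ℝ} {x d : EuclideanSpace ℝ (Fin n)}
    (hw : StdWolfe m n Gl Gu ρ σ x d t) (hρ : 0 ≤ ρ) (ht : 0 ≤ t)
    (hψ : psi m n Gl Gu x d ≤ 0) (i : Fin m) :
    Gl i (x + t • d) ≤ Gl i x ∧ Gu i (x + t • d) ≤ Gu i x := by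
  have hdec : ρ * t * psi m n Gl Gu x d ≤ 0 :=
    mul_nonpos_of_nonneg_of_nonpos (mul_nonneg hρ ht) hψ
  exact ⟨by linarith [(hw.1 i).1], by linarith [(hw.1 i).2]⟩

theorem StdWolfe.one_sub_mul_neg_psi_le {ρ σ t L : ℝ} {x d : EuclideanSpace ℝ (Fin n)}
    (hw : StdWolfe m n Gl Gu ρ σ x d t) (ht : 0 ≤ t)
    (hLip : psi m n Gl Gu (x + t • d) d ≤ psi m n Gl Gu x d + 2 * L * ‖t • d‖ * ‖d‖) :
    (1 - σ) * -psi m n Gl Gu x d ≤ 2 * L * t * ‖d‖ ^ 2 := by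
  have hstep : 2 * L * ‖t • d‖ * ‖d‖ = 2 * L * t * ‖d‖ ^ 2 := by
    rw [norm_smul, Real.norm_of_nonneg ht]
    ring
  linarith [hw.2]

theorem sq_div_le_of_one_sub_mul_neg_le {ψ D K t σ : ℝ} (hψ : ψ ≤ 0) (hσ : σ < 1)
    (hD : 0 ≤ D) (h : (1 - σ) * -ψ ≤ K * t * D) : ψ ^ 2 / D ≤ K / (1 - σ) * (t * -ψ) := by
  have hσ' : 0 < 1 - σ := sub_pos.mpr hσ
  rcases hD.eq_or_lt with rfl | hD
  · have hψ0 : ψ = 0 := by nlinarith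
    simp [hψ0]
  · rw [div_le_iff₀ hD, div_mul_eq_mul_div, div_mul_eq_mul_div, le_div_iff₀ hσ']
    nlinarith

theorem summable_sq_psi_div_sq_norm [Nonempty (Fin m)] {ρ σ : ℝ}
    {x d : ℕ → EuclideanSpace ℝ (Fin n)} {t : ℕ → ℝ}
    (hA1 : AssumptionA1 m n Gl Gu (x 0)) (hA2 : AssumptionA2 m n Gl Gu (x 0))
    (hρ : 0 < ρ) (hσ : σ < 1) (hx : ∀ k, x (k + 1) = x k + t k • d k) (ht : ∀ k, 0 < t k)
    (hψ : ∀ k, psi m n Gl Gu (x k) (d k) ≤ 0)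
    (hw : ∀ k, StdWolfe m n Gl Gu ρ σ (x k) (d k) (t k)) :
    Summable fun k => psi m n Gl Gu (x k) (d k) ^ 2 / ‖d k‖ ^ 2 := by
  have hdec : ∀ i k, Gl i (x (k + 1)) ≤ Gl i (x k) ∧ Gu i (x (k + 1)) ≤ Gu i (x k) :=
    fun i k => hx k ▸ (hw k).objectives_le hρ.le (ht k).le (hψ k) i
  have hlevel := mem_levelSet_of_forall_succ_le hdec
  obtain ⟨L, hL⟩ := hA1.exists_uniform
  obtain ⟨i₀⟩ := ‹Nonempty (Fin m)›
  obtain ⟨⟨C, hC⟩, -⟩ := hA2 x hlevel hdec i₀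
  have hdecrease : Summable fun k => t k * -psi m n Gl Gu (x k) (d k) := by
    refine (summable_mul_left_iff hρ.ne').1 (summable_of_add_le_of_forall_le
      (fun k => mul_nonneg hρ.le (mul_nonneg (ht k).le (neg_nonneg.mpr (hψ k)))) (fun k => ?_) hC)
    have h := ((hw k).1 i₀).1
    rw [← hx k] at h
    linarith
  have hcurv : ∀ k, (1 - σ) * -psi m n Gl Gu (x k) (d k) ≤ 2 * L * t k * ‖d k‖ ^ 2 := by
    intro k
    refine (hw k).one_sub_mul_neg_psi_le (ht k).le ?_
    have h := psi_le_psi_add (hL · _ (hlevel (k + 1)) _ (hlevel k)) (d k)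
    rwa [hx k, add_sub_cancel_left] at h
  exact (hdecrease.mul_left (2 * L / (1 - σ))).of_nonneg_of_le (fun k => by positivity)
    fun k => sq_div_le_of_one_sub_mul_neg_le (hψ k) hσ (by positivity) (hcurv k)

end Iteration

theorem general_convergence_std_wolfe_general (m n : ℕ) (hm : 0 < m)
    (Gl Gu : Fin m → EuclideanSpace ℝ (Fin n) → ℝ)
    (vv : EuclideanSpace ℝ (Fin n) → EuclideanSpace ℝ (Fin n))
    (hvmin : ∀ y w : EuclideanSpace ℝ (Fin n),
      psi m n Gl Gu y (vv y) + (1/2) * ‖vv y‖^2 ≤ psi m n Gl Gu y w + (1/2) * ‖w‖^2)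
    (ρ σ : ℝ) (hρ : 0 < ρ) (hσ : σ < 1)
    (x d : ℕ → EuclideanSpace ℝ (Fin n)) (t : ℕ → ℝ)
    (hx : ∀ k : ℕ, x (k+1) = x k + t k • d k)
    (ht : ∀ k : ℕ, 0 < t k)
    (hA1 : AssumptionA1 m n Gl Gu (x 0))
    (hA2 : AssumptionA2 m n Gl Gu (x 0))
    (hdiv : ¬ Summable (fun k : ℕ => 1 / ‖d k‖^2))
    (hc : ∃ c : ℝ, 0 < c ∧ ∀ k : ℕ,
      psi m n Gl Gu (x k) (d k) ≤ c * psi m n Gl Gu (x k) (vv (x k)))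
    (hw : ∀ k : ℕ, StdWolfe m n Gl Gu ρ σ (x k) (d k) (t k)) :
    Filter.liminf (fun k : ℕ => ‖vv (x k)‖) Filter.atTop = 0 := by
  have : Nonempty (Fin m) := ⟨⟨0, hm⟩⟩
  obtain ⟨c, hc0, hcd⟩ := hc
  have hdescent : ∀ k, psi m n Gl Gu (x k) (d k) ≤ -(c / 2) * ‖vv (x k)‖ ^ 2 := fun k => by
    nlinarith [hcd k, psi_le_neg_half_sq_norm (hvmin (x k))]
  have hzoutendijk := summable_sq_psi_div_sq_norm hA1 hA2 hρ hσ hx ht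
    (fun k => (hdescent k).trans (by nlinarith [sq_nonneg ‖vv (x k)‖])) hw
  refine liminf_eq_zero_of_frequently_lt (fun k => norm_nonneg _) fun ε hε => ?_
  by_contra hlarge
  refine hdiv (summable_of_summable_mul_of_eventually_le
    (a := fun k => psi m n Gl Gu (x k) (d k) ^ 2) (δ := (c / 2 * ε ^ 2) ^ 2)
    (by positivity) (fun k => by positivity) ?_ (by simpa only [mul_one_div] using hzoutendijk))
  filter_upwards [not_frequently.mp hlarge] with k hk
  have hsq : ε ^ 2 ≤ ‖vv (x k)‖ ^ 2 := pow_le_pow_left₀ hε.le (not_lt.mp hk) 2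
  have hε' : c / 2 * ε ^ 2 ≤ -psi m n Gl Gu (x k) (d k) := by
    nlinarith [hdescent k, mul_le_mul_of_nonneg_left hsq (by positivity : (0 : ℝ) ≤ c / 2)]
  simpa only [neg_sq] using pow_le_pow_left₀ (by positivity) hε' 2

theorem general_convergence_std_wolfe (m n : ℕ) (hm : 0 < m) (hn : 0 < n)
    (Gl Gu : Fin m → EuclideanSpace ℝ (Fin n) → ℝ)
    (hGl : ∀ i, ContDiff ℝ 1 (Gl i)) (hGu : ∀ i, ContDiff ℝ 1 (Gu i))
    (hle : ∀ (i : Fin m) (x : EuclideanSpace ℝ (Fin n)), Gl i x ≤ Gu i x)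
    (vv : EuclideanSpace ℝ (Fin n) → EuclideanSpace ℝ (Fin n))
    (hvmin : ∀ y w : EuclideanSpace ℝ (Fin n),
      psi m n Gl Gu y (vv y) + (1/2) * ‖vv y‖^2 ≤ psi m n Gl Gu y w + (1/2) * ‖w‖^2)
    (ρ σ : ℝ) (hρ : 0 < ρ) (hρσ : ρ < σ) (hσ : σ < 1)
    (x d : ℕ → EuclideanSpace ℝ (Fin n)) (t : ℕ → ℝ) (β : ℕ → ℝ)
    (hx : ∀ k : ℕ, x (k+1) = x k + t k • d k)
    (ht : ∀ k : ℕ, 0 < t k)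
    (hd0 : d 0 = vv (x 0))
    (hdk : ∀ k : ℕ, d (k+1) = vv (x (k+1)) + β (k+1) • d k)
    (hvne : ∀ k : ℕ, vv (x k) ≠ 0)
    (hA1 : AssumptionA1 m n Gl Gu (x 0))
    (hA2 : AssumptionA2 m n Gl Gu (x 0))
    (hdiv : ¬ Summable (fun k : ℕ => 1 / ‖d k‖^2))
    (hc : ∃ c : ℝ, 0 < c ∧ ∀ k : ℕ,
      psi m n Gl Gu (x k) (d k) ≤ c * psi m n Gl Gu (x k) (vv (x k)))
    (hw : ∀ k : ℕ, StdWolfe m n Gl Gu ρ σ (x k) (d k) (t k)) :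
    Filter.liminf (fun k : ℕ => ‖vv (x k)‖) Filter.atTop = 0 :=
  general_convergence_std_wolfe_general m n hm Gl Gu vv hvmin ρ σ hρ hσ x d t hx ht hA1 hA2 hdiv hc
    hw
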